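/- arXiv:math/0608190 — 4 statements merged into one kernel-verified Lean document; each statement's English description precedes it below -/
import Mathlib

section
/- If a group G is subgroup separable, then every finite-index subgroup of G is subgroup separable, and conversely if some finite-index subgroup of G is subgroup separable then G is subgroup separable. -/
/-- A subgroup `K` is closed in the profinite topology of `G`: every element outside `K`
is separated from the coset `K·N` of some finite-index normal subgroup `N`. -/
def ProfClosed {G : Type*} [Group G] (K : Subgroup G) : Prop :=
  ∀ g : G, g ∉ K → ∃ N : Subgroup G, N.Normal ∧ N.FiniteIndex ∧ ∀ k ∈ K, ∀ n ∈ N, g ≠ k * n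

/-- `G` is subgroup separable (LERF). -/
def SubgroupSeparable (G : Type*) [Group G] : Prop :=
  ∀ H : Subgroup G, H.FG → ∀ g ∉ H, ∃ K : Subgroup G, K.FiniteIndex ∧ H ≤ K ∧ g ∉ K

/-- `G` is residually finite. -/
def ResiduallyFinite (G : Type*) [Group G] : Prop :=
  ∀ g : G, g ≠ 1 → ∃ N : Subgroup G, N.Normal ∧ N.FiniteIndex ∧ g ∉ N

/-- `G` is polycyclic: it has a subnormal series with cyclic quotients. -/
def IsPolycyclic (G : Type*) [Group G] : Prop :=
  ∃ (n : ℕ) (s : Fin (n + 1) → Subgroup G),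
    s 0 = ⊥ ∧ s (Fin.last n) = ⊤ ∧
    ∀ i : Fin n, s i.castSucc ≤ s i.succ ∧
      (∀ x ∈ s i.succ, ∀ y ∈ s i.castSucc, x * y * x⁻¹ ∈ s i.castSucc) ∧
      ∃ g ∈ s i.succ, ∀ x ∈ s i.succ, ∃ k : ℤ, x * (g ^ k)⁻¹ ∈ s i.castSucc

open scoped commutatorElement

/-- Relators of the right-angled Artin group of a graph `X`. -/
def raagRels {V : Type*} (X : SimpleGraph V) : Set (FreeGroup V) :=
  {r | ∃ u v : V, X.Adj u v ∧ r = ⁅FreeGroup.of u, FreeGroup.of v⁆}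

/-- The right-angled Artin group of a graph `X`. -/
def RAAG {V : Type*} (X : SimpleGraph V) := PresentedGroup (raagRels X)

instance {V : Type*} (X : SimpleGraph V) : Group (RAAG X) := by unfold RAAG; infer_instance

private lemma fg_map_aux {G H : Type*} [Group G] [Group H] {P : Subgroup G} (h : P.FG)
    (f : G →* H) : (P.map f).FG := by
  obtain ⟨S, hS, hfin⟩ := (Subgroup.fg_iff P).1 h
  exact (Subgroup.fg_iff _).2 ⟨f '' S, by rw [← MonoidHom.map_closure, hS], hfin.image f⟩

/-- Subgroup separability passes to arbitrary subgroups. -/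
private lemma sep_of_sep {G : Type*} [Group G] (hG : SubgroupSeparable G) (K : Subgroup G) :
    SubgroupSeparable K := by
  intro H hH g hg
  have hH' : (H.map K.subtype).FG := fg_map_aux hH _
  have hg' : (g : G) ∉ H.map K.subtype := by
    rintro ⟨x, hx, hxg⟩
    exact hg ((Subtype.ext hxg : x = g) ▸ hx)
  obtain ⟨L, hLfi, hHL, hgL⟩ := hG _ hH' g hg'
  haveI := hLfi
  refine ⟨L.subgroupOf K, inferInstance, ?_, fun h => hgL h⟩
  intro x hx
  exact Subgroup.mem_subgroupOf.2 (hHL ⟨x, hx, rfl⟩)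

private lemma sep_up {G : Type*} [Group G] (K : Subgroup G) (hKfi : K.FiniteIndex)
    (hK : SubgroupSeparable K) : SubgroupSeparable G := by
  intro H hH g hg
  haveI := hKfi
  haveI : Group.FG H := (Group.fg_iff_subgroup_fg H).2 hH
  haveI : Group.FG (K.subgroupOf H) := Subgroup.fg_of_index_ne_zero _
  -- `H ⊓ K` is finitely generated
  have hHK : (H ⊓ K).FG := by
    have h1 := fg_map_aux ((Group.fg_iff_subgroup_fg _).1
      ‹Group.FG (K.subgroupOf H)›) H.subtype
    rwa [Subgroup.subgroupOf_map_subtype, inf_comm] at h1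
  -- `(H ⊓ K).subgroupOf K` is finitely generated
  have hH₂ : ((H ⊓ K).subgroupOf K).FG := by
    haveI : Group.FG (H ⊓ K : Subgroup G) := (Group.fg_iff_subgroup_fg _).2 hHK
    have : Group.FG ((H ⊓ K).subgroupOf K) :=
      Group.fg_of_surjective (f := ((Subgroup.subgroupOfEquivOfLe
        (inf_le_right : H ⊓ K ≤ K)).symm : (H ⊓ K : Subgroup G) →* (H ⊓ K).subgroupOf K))
        (Subgroup.subgroupOfEquivOfLe inf_le_right).symm.surjective
    exact (Group.fg_iff_subgroup_fg _).1 this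
  -- per-coset separation
  have key : ∀ c : H ⧸ K.subgroupOf H, ∃ N : Subgroup G, N.Normal ∧ N.FiniteIndex ∧
      ∀ x ∈ H ⊓ K, ∀ n ∈ N, g ≠ ((Quotient.out c : H) : G) * x * n := by
    intro c
    set t : G := ((Quotient.out c : H) : G) with ht_def
    have htH : t ∈ H := (Quotient.out c : H).2
    by_cases ht : t⁻¹ * g ∈ K
    · -- separate inside `K`
      have hk₀ : (⟨t⁻¹ * g, ht⟩ : K) ∉ (H ⊓ K).subgroupOf K := by
        intro hm
        have : t⁻¹ * g ∈ H := (Subgroup.mem_subgroupOf.1 hm).1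
        exact hg (by simpa using H.mul_mem htH this)
      obtain ⟨M, hMfi, hHM, hkM⟩ := hK _ hH₂ _ hk₀
      haveI := hMfi
      set M' : Subgroup G := M.map K.subtype with hM'
      have hM'K : M' ≤ K := Subgroup.map_subtype_le M
      have hM'fi : M'.FiniteIndex := by
        constructor
        rw [← Subgroup.relIndex_mul_index hM'K]
        have : M'.subgroupOf K = M :=
          Subgroup.comap_map_eq_self_of_injective K.subtype_injective M
        rw [Subgroup.relIndex, this]
        exact Nat.mul_ne_zero hMfi.index_ne_zero hKfi.index_ne_zero
      haveI := hM'fi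
      refine ⟨M'.normalCore, Subgroup.normalCore_normal M', inferInstance, ?_⟩
      rintro x hx n hn rfl
      have hxM : x ∈ M' := by
        have : (⟨x, hx.2⟩ : K) ∈ M := hHM (Subgroup.mem_subgroupOf.2 (by simpa using hx))
        exact ⟨⟨x, hx.2⟩, this, rfl⟩
      have hnM : n ∈ M' := M'.normalCore_le hn
      have : t⁻¹ * (t * x * n) ∈ M' := by
        have := M'.mul_mem hxM hnM
        simpa [mul_assoc] using this
      apply hkM
      have hMeq : M'.subgroupOf K = M :=
        Subgroup.comap_map_eq_self_of_injective K.subtype_injective M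
      rw [← hMeq]
      exact Subgroup.mem_subgroupOf.2 this
    · -- the whole coset misses `K`'s normal core neighborhood
      refine ⟨K.normalCore, Subgroup.normalCore_normal K, inferInstance, ?_⟩
      rintro x hx n hn rfl
      apply ht
      have : t⁻¹ * (t * x * n) ∈ K := by
        have := K.mul_mem hx.2 (K.normalCore_le hn)
        simpa [mul_assoc] using this
      exact this
  choose N hNnorm hNfi hNprop using key
  haveI : Finite (H ⧸ K.subgroupOf H) := Subgroup.finite_quotient_of_finiteIndex
  set N₀ : Subgroup G := ⨅ c, N c with hN₀
  haveI hN₀norm : N₀.Normal := by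
    constructor
    intro n hn x
    rw [hN₀, Subgroup.mem_iInf] at hn ⊢
    intro c
    exact (hNnorm c).conj_mem n (hn c) x
  haveI hN₀fi : N₀.FiniteIndex := Subgroup.finiteIndex_iInf hNfi
  refine ⟨H ⊔ N₀, Subgroup.finiteIndex_of_le le_sup_right, le_sup_left, ?_⟩
  intro hgmem
  rw [← SetLike.mem_coe, Subgroup.mul_normal H N₀] at hgmem
  obtain ⟨h, hh, n, hn, rfl⟩ := hgmem
  set c : H ⧸ K.subgroupOf H := QuotientGroup.mk ⟨h, hh⟩ with hc
  set t : H := Quotient.out c with htdef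
  have hmk : QuotientGroup.mk t = c := QuotientGroup.out_eq' c
  have hx : (t : H)⁻¹ * ⟨h, hh⟩ ∈ K.subgroupOf H := QuotientGroup.eq.1 (hmk.trans hc)
  have hxK : (t : G)⁻¹ * h ∈ K := by simpa [Subgroup.mem_subgroupOf] using hx
  have hxH : (t : G)⁻¹ * h ∈ H := H.mul_mem (H.inv_mem t.2) hh
  have hdecomp : h * n = (t : G) * ((t : G)⁻¹ * h) * n := by group
  exact hNprop c _ ⟨hxH, hxK⟩ n (Subgroup.mem_iInf.1 hn c) hdecomp

/-- Subgroup separability passes to finite-index subgroups, and conversely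
holds for `G` if some finite-index subgroup of `G` is subgroup separable. -/
theorem stmt3 (G : Type*) [Group G] :
    (SubgroupSeparable G → ∀ K : Subgroup G, K.FiniteIndex → SubgroupSeparable K) ∧
    ((∃ K : Subgroup G, K.FiniteIndex ∧ SubgroupSeparable K) → SubgroupSeparable G) := by
  refine ⟨fun hG K _ => sep_of_sep hG K, ?_⟩
  rintro ⟨K, hKfi, hK⟩
  exact sep_up K hKfi hK
end

section
/- The right-angled Artin group on a graph X containing a full subgraph that is a square (closed path of length four on vertices v₁, v₂, v₃, v₄ with edges v₁v₂, v₂v₃, v₃v₄, v₄v₁ and no diagonals) contains a subgroup isomorphic to F₂ × F₂, the direct product of two free groups of rank two. -/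
open scoped commutatorElement

/-- If the graph `X` contains a full subgraph that is a square, the
right-angled Artin group `G(X)` contains a subgroup isomorphic to `F₂ × F₂`. -/
theorem stmt6 {V : Type*} [Fintype V] (X : SimpleGraph V) (v₁ v₂ v₃ v₄ : V)
    (h12 : v₁ ≠ v₂) (h13 : v₁ ≠ v₃) (h14 : v₁ ≠ v₄) (h23 : v₂ ≠ v₃) (h24 : v₂ ≠ v₄)
    (h34 : v₃ ≠ v₄)
    (e12 : X.Adj v₁ v₂) (e23 : X.Adj v₂ v₃) (e34 : X.Adj v₃ v₄) (e41 : X.Adj v₄ v₁)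
    (d13 : ¬ X.Adj v₁ v₃) (d24 : ¬ X.Adj v₂ v₄) :
    ∃ H : Subgroup (RAAG X),
      Nonempty (H ≃* (FreeGroup (Fin 2) × FreeGroup (Fin 2))) := by
  classical
  set F := FreeGroup (Fin 2) with hF
  let a : F := FreeGroup.of 0
  let b : F := FreeGroup.of 1
  -- generators commute along edges
  have key : ∀ u w : V, X.Adj u w →
      Commute (PresentedGroup.of (rels := raagRels X) u) (PresentedGroup.of w) := by
    intro u w huw
    rw [← commutatorElement_eq_one_iff_commute]
    have h1 : (⁅FreeGroup.of u, FreeGroup.of w⁆ : FreeGroup V) ∈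
        Subgroup.normalClosure (raagRels X) :=
      Subgroup.subset_normalClosure ⟨u, w, huw, rfl⟩
    have h2 : QuotientGroup.mk' (Subgroup.normalClosure (raagRels X))
        (⁅FreeGroup.of u, FreeGroup.of w⁆) = 1 := (QuotientGroup.eq_one_iff _).2 h1
    rw [map_commutatorElement] at h2
    exact h2
  -- the retraction to F₂ × F₂
  let f1 : V → F := fun v => if v = v₁ then a else if v = v₃ then b else 1
  let f2 : V → F := fun v => if v = v₂ then a else if v = v₄ then b else 1
  let f : V → F × F := fun v => (f1 v, f2 v)
  have hrel : ∀ r ∈ raagRels X, FreeGroup.lift f r = 1 := by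
    rintro r ⟨u, w, huw, rfl⟩
    rw [map_commutatorElement, commutatorElement_eq_one_iff_commute]
    simp only [FreeGroup.lift_apply_of]
    have hne : u ≠ w := X.ne_of_adj huw
    have c1 : Commute (f1 u) (f1 w) := by
      rcases eq_or_ne u v₁ with h1 | h1
      · have hw1 : w ≠ v₁ := fun e => hne (h1.trans e.symm)
        have hw3 : w ≠ v₃ := fun e => d13 (by rwa [h1, e] at huw)
        have hw : f1 w = 1 := by simp [f1, hw1, hw3]
        rw [hw]; exact Commute.one_right _
      · rcases eq_or_ne u v₃ with h3 | h3
        · have hw3 : w ≠ v₃ := fun e => hne (h3.trans e.symm)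
          have hw1 : w ≠ v₁ := fun e => d13 (X.adj_symm (by rwa [h3, e] at huw))
          have hw : f1 w = 1 := by simp [f1, hw1, hw3]
          rw [hw]; exact Commute.one_right _
        · have hu : f1 u = 1 := by simp [f1, h1, h3]
          rw [hu]; exact Commute.one_left _
    have c2 : Commute (f2 u) (f2 w) := by
      rcases eq_or_ne u v₂ with h2 | h2
      · have hw2 : w ≠ v₂ := fun e => hne (h2.trans e.symm)
        have hw4 : w ≠ v₄ := fun e => d24 (by rwa [h2, e] at huw)
        have hw : f2 w = 1 := by simp [f2, hw2, hw4]
        rw [hw]; exact Commute.one_right _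
      · rcases eq_or_ne u v₄ with h4 | h4
        · have hw4 : w ≠ v₄ := fun e => hne (h4.trans e.symm)
          have hw2 : w ≠ v₂ := fun e => d24 (X.adj_symm (by rwa [h4, e] at huw))
          have hw : f2 w = 1 := by simp [f2, hw2, hw4]
          rw [hw]; exact Commute.one_right _
        · have hu : f2 u = 1 := by simp [f2, h2, h4]
          rw [hu]; exact Commute.one_left _
    show f u * f w = f w * f u
    simp only [f, Prod.mk_mul_mk]
    exact Prod.ext c1 c2
  let φ : PresentedGroup (raagRels X) →* F × F := PresentedGroup.toGroup hrel
  -- maps F₂ into RAAG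
  let lift₁ : F →* PresentedGroup (raagRels X) :=
    FreeGroup.lift (fun i : Fin 2 => if i = 0 then PresentedGroup.of v₁ else PresentedGroup.of v₃)
  let lift₂ : F →* PresentedGroup (raagRels X) :=
    FreeGroup.lift (fun i : Fin 2 => if i = 0 then PresentedGroup.of v₂ else PresentedGroup.of v₄)
  have commYgen : ∀ y : PresentedGroup (raagRels X),
      Commute y (PresentedGroup.of v₂) → Commute y (PresentedGroup.of v₄) →
      ∀ h : F, Commute y (lift₂ h) := by
    intro y hy2 hy4 h
    induction h using FreeGroup.induction_on with
    | C1 => rw [map_one]; exact Commute.one_right y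
    | of i =>
      have : lift₂ (FreeGroup.of i) =
          if i = 0 then PresentedGroup.of v₂ else PresentedGroup.of v₄ := FreeGroup.lift_apply_of
      show Commute y (lift₂ (FreeGroup.of i))
      rw [this]
      split_ifs
      · exact hy2
      · exact hy4
    | inv_of i ih =>
      rw [map_inv]; exact ih.inv_right
    | mul g h ihg ihh =>
      rw [map_mul]; exact ihg.mul_right ihh
  have comm : ∀ (g h : F), Commute (lift₁ g) (lift₂ h) := by
    intro g
    induction g using FreeGroup.induction_on with
    | C1 => intro h; rw [map_one]; exact Commute.one_left _
    | of i =>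
      have : lift₁ (FreeGroup.of i) =
          if i = 0 then PresentedGroup.of v₁ else PresentedGroup.of v₃ := FreeGroup.lift_apply_of
      show ∀ h : F, Commute (lift₁ (FreeGroup.of i)) (lift₂ h)
      rw [this]
      split_ifs
      · exact commYgen _ (key _ _ e12) (key _ _ (X.adj_symm e41))
      · exact commYgen _ (key _ _ (X.adj_symm e23)) (key _ _ e34)
    | inv_of i ih =>
      intro h; rw [map_inv]; exact (ih h).inv_left
    | mul g g' ihg ihg' =>
      intro h; rw [map_mul]; exact (ihg h).mul_left (ihg' h)
  let ψ : F × F →* PresentedGroup (raagRels X) := MonoidHom.noncommCoprod lift₁ lift₂ comm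
  -- φ ∘ ψ = id
  have hφ1 : ∀ g : F, φ (lift₁ g) = (g, 1) := by
    intro g
    induction g using FreeGroup.induction_on with
    | C1 => rw [map_one, map_one]; rfl
    | of i =>
      show φ (lift₁ (FreeGroup.of i)) = (FreeGroup.of i, 1)
      have : lift₁ (FreeGroup.of i) =
          if i = 0 then PresentedGroup.of v₁ else PresentedGroup.of v₃ := FreeGroup.lift_apply_of
      rw [this]
      rcases Fin.exists_fin_two.mp ⟨i, rfl⟩ with h | h
      all_goals subst h
      · rw [if_pos rfl]
        rw [show φ (PresentedGroup.of v₁) = f v₁ from PresentedGroup.toGroup.of hrel]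
        simp [f, f1, f2, h12, h14, a]
      · rw [if_neg (by decide)]
        rw [show φ (PresentedGroup.of v₃) = f v₃ from PresentedGroup.toGroup.of hrel]
        simp [f, f1, f2, h13.symm, h23.symm, h34, b]
    | inv_of i ih =>
      rw [map_inv, map_inv, ih]; rfl
    | mul g g' ihg ihg' =>
      rw [map_mul, map_mul, ihg, ihg', Prod.mk_mul_mk, one_mul]
  have hφ2 : ∀ g : F, φ (lift₂ g) = (1, g) := by
    intro g
    induction g using FreeGroup.induction_on with
    | C1 => rw [map_one, map_one]; rfl
    | of i =>
      show φ (lift₂ (FreeGroup.of i)) = (1, FreeGroup.of i)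
      have : lift₂ (FreeGroup.of i) =
          if i = 0 then PresentedGroup.of v₂ else PresentedGroup.of v₄ := FreeGroup.lift_apply_of
      rw [this]
      rcases Fin.exists_fin_two.mp ⟨i, rfl⟩ with h | h
      all_goals subst h
      · rw [if_pos rfl]
        rw [show φ (PresentedGroup.of v₂) = f v₂ from PresentedGroup.toGroup.of hrel]
        simp [f, f1, f2, h12.symm, h23, h24, a]
      · rw [if_neg (by decide)]
        rw [show φ (PresentedGroup.of v₄) = f v₄ from PresentedGroup.toGroup.of hrel]
        simp [f, f1, f2, h14.symm, h34.symm, h24.symm, b]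
    | inv_of i ih =>
      rw [map_inv, map_inv, ih]; rfl
    | mul g g' ihg ihg' =>
      rw [map_mul, map_mul, ihg, ihg', Prod.mk_mul_mk, one_mul]
  have hli : Function.LeftInverse φ ψ := by
    rintro ⟨g, h⟩
    have : ψ (g, h) = lift₁ g * lift₂ h := rfl
    rw [this, map_mul, hφ1, hφ2, Prod.mk_mul_mk, mul_one, one_mul]
  have hinj : Function.Injective ψ := hli.injective
  exact ⟨ψ.range, ⟨(MonoidHom.ofInjective hinj).symm⟩⟩
end

section
/- Let F_n be the free group on generators x₁, …, x_n, let r₁, …, r_m ∈ F_n, and let L ≤ F_n × F_n be the subgroup generated by the diagonal elements (x_i, x_i) for i = 1, …, n together with the elements (1, r_j) for j = 1, …, m. Then L ∩ ({1} × F_n) = {1} × R, where R is the normal closure in F_n of {r₁, …, r_m}. -/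
open scoped commutatorElement

/-- The Michailova subgroup `L` of `F_n × F_n` generated by the diagonal
generators `(x_i, x_i)` and the relators `(1, r_j)` satisfies
`L ∩ ({1} × F_n) = {1} × R`, with `R` the normal closure of the relators. -/
theorem stmt15 (n m : ℕ) (r : Fin m → FreeGroup (Fin n)) :
    (Subgroup.closure
        ((Set.range fun i : Fin n => ((FreeGroup.of i, FreeGroup.of i) :
            FreeGroup (Fin n) × FreeGroup (Fin n))) ∪
          (Set.range fun j : Fin m => ((1, r j) :
            FreeGroup (Fin n) × FreeGroup (Fin n))))).comap
        (MonoidHom.inr (FreeGroup (Fin n)) (FreeGroup (Fin n)))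
      = Subgroup.normalClosure (Set.range r) := by
  let F := FreeGroup (Fin n)
  let R : Subgroup F := Subgroup.normalClosure (Set.range r)
  let S : Set (F × F) := (Set.range fun i : Fin n => ((FreeGroup.of i, FreeGroup.of i) : F × F)) ∪
      (Set.range fun j : Fin m => ((1, r j) : F × F))
  let L : Subgroup (F × F) := Subgroup.closure S
  show Subgroup.comap (MonoidHom.inr F F) L = R
  have hdiag : ∀ x : F, (x, x) ∈ L := by
    intro x
    have h1 : Subgroup.closure (Set.range (FreeGroup.of : Fin n → F)) = ⊤ :=
      FreeGroup.closure_range_of _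
    let d : F →* F × F := MonoidHom.prod (MonoidHom.id F) (MonoidHom.id F)
    have h2 : Subgroup.map d ⊤ ≤ L := by
      rw [← h1, MonoidHom.map_closure]
      apply Subgroup.closure_mono
      rintro _ ⟨_, ⟨i, rfl⟩, rfl⟩
      exact Or.inl ⟨i, rfl⟩
    exact h2 ⟨x, trivial, rfl⟩
  have hrj : ∀ j, ((1, r j) : F × F) ∈ L := fun j =>
    Subgroup.subset_closure (Or.inr ⟨j, rfl⟩)
  let M : Subgroup (F × F) :=
    { carrier := {p | p.1⁻¹ * p.2 ∈ R}
      one_mem' := by simpa using one_mem R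
      mul_mem' := by
        rintro ⟨a, b⟩ ⟨c, d⟩ ha hb
        simp only [Set.mem_setOf_eq, Prod.fst_mul, Prod.snd_mul] at *
        have h : (a * c)⁻¹ * (b * d) = (c⁻¹ * (a⁻¹ * b) * (c⁻¹)⁻¹) * (c⁻¹ * d) :=
          (fun _ _ _ _ => by group : ∀ a b c d : FreeGroup (Fin n), (a * c)⁻¹ * (b * d) = (c⁻¹ * (a⁻¹ * b) * (c⁻¹)⁻¹) * (c⁻¹ * d)) a b c d
        rw [h]
        exact mul_mem (Subgroup.normalClosure_normal.conj_mem _ ha _) hb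
      inv_mem' := by
        rintro ⟨a, b⟩ ha
        simp only [Set.mem_setOf_eq, Prod.fst_inv, Prod.snd_inv] at *
        have h : (a⁻¹)⁻¹ * b⁻¹ = a * (a⁻¹ * b)⁻¹ * a⁻¹ :=
          (fun _ _ => by group : ∀ a b : FreeGroup (Fin n), (a⁻¹)⁻¹ * b⁻¹ = a * (a⁻¹ * b)⁻¹ * a⁻¹) a b
        rw [h]
        exact Subgroup.normalClosure_normal.conj_mem _ (inv_mem ha) a }
  have key : L ≤ M := by
    apply (Subgroup.closure_le M).2
    rintro p (⟨i, rfl⟩ | ⟨j, rfl⟩)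
    · show (FreeGroup.of i)⁻¹ * FreeGroup.of i ∈ R
      simpa using one_mem R
    · show ((1 : F))⁻¹ * r j ∈ R
      simpa using Subgroup.subset_normalClosure (Set.mem_range_self j)
  apply le_antisymm
  · intro g hg
    have h := key hg
    have : (1 : F)⁻¹ * g ∈ R := h
    simpa using this
  · haveI hnormal : (Subgroup.comap (MonoidHom.inr F F) L).Normal := by
      constructor
      intro g hg x
      simp only [Subgroup.mem_comap] at *
      have h := mul_mem (mul_mem (hdiag x) hg) (inv_mem (hdiag x))
      have he : ((MonoidHom.inr F F) (x * g * x⁻¹) : F × F) = (x, x) * (1, g) * ((x, x))⁻¹ := by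
        simp [Prod.ext_iff]
        exact (mul_inv_cancel x).symm
      rw [he]
      exact h
    exact Subgroup.normalClosure_le_normal (fun p hp => by
      obtain ⟨j, hj⟩ := hp
      subst hj
      exact hrj j)
end

section
/- With notation as before (L the Michailova subgroup of F_n × F_n associated to the finite presentation H = ⟨x₁,…,x_n ∣ r₁,…,r_m⟩, and R the normal closure of the relators), L is closed in the profinite topology of F_n × F_n if and only if the group H = F_n / R is residually finite. -/
open scoped commutatorElement

section Aux
variable {n m : ℕ} (r : Fin m → FreeGroup (Fin n))

local notation "F" => FreeGroup (Fin n)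

/-- The Michailova subgroup. -/
def michL (r : Fin m → FreeGroup (Fin n)) : Subgroup (F × F) :=
  Subgroup.closure
    ((Set.range fun i : Fin n => ((FreeGroup.of i, FreeGroup.of i) : F × F)) ∪
      (Set.range fun j : Fin m => ((1, r j) : F × F)))

/-- The fiber product subgroup. -/
def fibS (r : Fin m → FreeGroup (Fin n)) : Subgroup (F × F) where
  carrier := {p | p.1⁻¹ * p.2 ∈ Subgroup.normalClosure (Set.range r)}
  one_mem' := by
    simpa using (Subgroup.normalClosure (Set.range r)).one_mem
  mul_mem' := by
    intro a b ha hb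
    simp only [Set.mem_setOf_eq, Prod.fst_mul, Prod.snd_mul, mul_inv_rev] at *
    have h1 := Subgroup.normalClosure_normal.conj_mem _ ha b.1⁻¹
    have h2 := (Subgroup.normalClosure (Set.range r)).mul_mem h1 hb
    convert h2 using 1
    group
  inv_mem' := by
    intro a ha
    simp only [Set.mem_setOf_eq, Prod.fst_inv, Prod.snd_inv, inv_inv] at *
    have h1 := Subgroup.normalClosure_normal.conj_mem _
      ((Subgroup.normalClosure (Set.range r)).inv_mem ha) a.1
    convert h1 using 1
    group

theorem diag_mem_michL (a : F) : (a, a) ∈ michL r := by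
  have : (⊤ : Subgroup F) ≤ (michL r).comap
      (MonoidHom.prod (MonoidHom.id F) (MonoidHom.id F)) := by
    rw [← FreeGroup.closure_range_of (Fin n)]
    rw [Subgroup.closure_le]
    rintro _ ⟨i, rfl⟩
    exact Subgroup.subset_closure (Or.inl ⟨i, rfl⟩)
  exact this (Subgroup.mem_top a)

theorem mem_michL_iff (p : F × F) :
    p ∈ michL r ↔ p.1⁻¹ * p.2 ∈ Subgroup.normalClosure (Set.range r) := by
  constructor
  · intro hp
    have : michL r ≤ fibS r := by
      rw [michL, Subgroup.closure_le]
      rintro _ (⟨i, rfl⟩ | ⟨j, rfl⟩)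
      · show (FreeGroup.of i)⁻¹ * FreeGroup.of i ∈ Subgroup.normalClosure (Set.range r)
        simpa using (Subgroup.normalClosure (Set.range r)).one_mem
      · show (1 : FreeGroup (Fin n))⁻¹ * r j ∈ Subgroup.normalClosure (Set.range r)
        simpa using Subgroup.subset_normalClosure (Set.mem_range_self j)
    exact this hp
  · intro hp
    -- p = (p.1, p.1) * (1, p.1⁻¹ * p.2)
    have h2 : ((1 : F), p.1⁻¹ * p.2) ∈ michL r := by
      have hnorm : ((michL r).comap (MonoidHom.inr (FreeGroup (Fin n)) (FreeGroup (Fin n)))).Normal := by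
        constructor
        intro b hb g
        simp only [Subgroup.mem_comap, MonoidHom.inr_apply] at *
        have := (michL r).mul_mem ((michL r).mul_mem (diag_mem_michL r g) hb)
          ((michL r).inv_mem (diag_mem_michL r g))
        simpa using this
      have hle : Subgroup.normalClosure (Set.range r) ≤
          (michL r).comap (MonoidHom.inr (FreeGroup (Fin n)) (FreeGroup (Fin n))) := by
        apply Subgroup.normalClosure_le_normal
        rintro _ ⟨j, rfl⟩
        exact Subgroup.subset_closure (Or.inr ⟨j, rfl⟩)
      exact hle hp
    have := (michL r).mul_mem (diag_mem_michL r p.1) h2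
    simpa using this

end Aux

theorem stmt16_aux (n m : ℕ) (r : Fin m → FreeGroup (Fin n)) :
    ProfClosed (michL r) ↔
      ResiduallyFinite (FreeGroup (Fin n) ⧸ Subgroup.normalClosure (Set.range r)) := by
  set R := Subgroup.normalClosure (Set.range r) with hR
  have hmem : ∀ p : FreeGroup (Fin n) × FreeGroup (Fin n),
      p ∈ michL r ↔ p.1⁻¹ * p.2 ∈ R := mem_michL_iff r
  have hker : (QuotientGroup.mk' R).ker = R := QuotientGroup.ker_mk' R
  constructor
  · -- closed → residually finite
    intro hcl h hne
    obtain ⟨w, rfl⟩ := QuotientGroup.mk'_surjective R h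
    have hwR : w ∉ R := by
      intro hw
      exact hne ((QuotientGroup.eq_one_iff w).mpr hw)
    have hnotL : ((1 : FreeGroup (Fin n)), w) ∉ michL r := by
      rw [hmem]; simpa using hwR
    obtain ⟨N, hNnorm, hNfi, hsep⟩ := hcl _ hnotL
    haveI := hNnorm
    haveI := hNfi
    -- S = preimage of L ⊔ N under inr
    set S : Subgroup (FreeGroup (Fin n)) := (michL r ⊔ N).comap (MonoidHom.inr (FreeGroup (Fin n)) (FreeGroup (Fin n))) with hS
    have hN2 : (N.comap (MonoidHom.inr (FreeGroup (Fin n)) (FreeGroup (Fin n)))).FiniteIndex := by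
      constructor
      rw [Subgroup.index_comap]
      intro h0
      exact hNfi.index_ne_zero (Nat.eq_zero_of_zero_dvd
        (h0 ▸ Subgroup.relIndex_dvd_index_of_normal N _))
    have hSfi : S.FiniteIndex := by
      haveI := hN2
      exact Subgroup.finiteIndex_of_le (Subgroup.comap_mono le_sup_right)
    have hRS : R ≤ S := by
      intro ρ hρ
      simp only [hS, Subgroup.mem_comap, MonoidHom.inr_apply]
      apply Subgroup.mem_sup_left
      rw [hmem]; simpa using hρ
    have hwS : w ∉ S := by
      intro hw
      simp only [hS, Subgroup.mem_comap, MonoidHom.inr_apply] at hw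
      rw [← SetLike.mem_coe, Subgroup.mul_normal (michL r) N] at hw
      obtain ⟨k, hk, u, hu, hku⟩ := hw
      exact hsep k hk u hu hku.symm
    -- T = image of S in H
    set T := S.map (QuotientGroup.mk' R) with hT
    have hTfi : T.FiniteIndex := by
      constructor
      have : T.comap (QuotientGroup.mk' R) = S := by
        rw [hT, Subgroup.comap_map_eq, hker, sup_eq_left.mpr hRS]
      rw [← Subgroup.index_comap_of_surjective T (QuotientGroup.mk'_surjective R), this]
      exact hSfi.index_ne_zero
    have hhT : (QuotientGroup.mk' R) w ∉ T := by
      rintro ⟨s, hs, hsw⟩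
      have : s⁻¹ * w ∈ R := by
        rw [QuotientGroup.mk'_eq_mk'] at hsw
        obtain ⟨z, hz, rfl⟩ := hsw
        simpa using hz
      exact hwS (by simpa using S.mul_mem hs (hRS this))
    haveI := hTfi
    exact ⟨T.normalCore, T.normalCore_normal, Subgroup.finiteIndex_normalCore T,
      fun hc => hhT (T.normalCore_le hc)⟩
  · -- residually finite → closed
    intro hrf p hp
    have hpR : p.1⁻¹ * p.2 ∉ R := fun h => hp ((hmem p).mpr h)
    have hne : (QuotientGroup.mk' R) (p.1⁻¹ * p.2) ≠ 1 := by
      intro h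
      exact hpR ((QuotientGroup.eq_one_iff _).mp h)
    obtain ⟨N', hN'norm, hN'fi, hN'g⟩ := hrf _ hne
    haveI := hN'norm
    haveI := hN'fi
    set N₀ := N'.comap (QuotientGroup.mk' R) with hN₀
    have hN₀norm : N₀.Normal := hN'norm.comap _
    have hN₀fi : N₀.FiniteIndex := by
      constructor
      rw [Subgroup.index_comap_of_surjective _ (QuotientGroup.mk'_surjective R)]
      exact hN'fi.index_ne_zero
    have hRN₀ : R ≤ N₀ := by
      intro ρ hρ
      simp only [hN₀, Subgroup.mem_comap]
      rw [← hker] at hρ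
      rw [MonoidHom.mem_ker.mp hρ]
      exact N'.one_mem
    have hpN₀ : p.1⁻¹ * p.2 ∉ N₀ := fun h => hN'g h
    refine ⟨N₀.prod N₀, ?_, ?_, ?_⟩
    · haveI := hN₀norm; exact Subgroup.prod_normal N₀ N₀
    · constructor
      rw [Subgroup.index_prod]
      simp [hN₀fi.index_ne_zero]
    · rintro k hk u hu rfl
      rw [hmem] at hk
      obtain ⟨hu1, hu2⟩ := Subgroup.mem_prod.mp hu
      apply hpN₀
      have h1 : (k * u).1⁻¹ * (k * u).2 = u.1⁻¹ * (k.1⁻¹ * k.2) * u.2 := by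
        simp only [Prod.fst_mul, Prod.snd_mul, mul_inv_rev]
        group
      rw [h1]
      exact N₀.mul_mem (N₀.mul_mem (N₀.inv_mem hu1) (hRN₀ hk)) hu2

/-- The Michailova subgroup `L` is closed in the profinite topology of
`F_n × F_n` iff the presented group `H = F_n / R` is residually finite. -/
theorem stmt16 (n m : ℕ) (r : Fin m → FreeGroup (Fin n)) :
    ProfClosed (Subgroup.closure
        ((Set.range fun i : Fin n => ((FreeGroup.of i, FreeGroup.of i) :
            FreeGroup (Fin n) × FreeGroup (Fin n))) ∪
          (Set.range fun j : Fin m => ((1, r j) :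
            FreeGroup (Fin n) × FreeGroup (Fin n))))) ↔
      ResiduallyFinite (FreeGroup (Fin n) ⧸ Subgroup.normalClosure (Set.range r)) :=
  stmt16_aux n m r
end
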